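/- arXiv:2504.19381 — 4 statements merged into one kernel-verified Lean document; each statement's English description precedes it below -/
import Mathlib

section
/- Let m ≥ 2 and let X₁, …, Xₘ be i.i.d. random variables with the exponential distribution of rate λ > 0 (density λ e^{−λx} on x ≥ 0). Then the m-th Gini index IG_m = E[max{X₁,…,Xₘ} − min{X₁,…,Xₘ}]/(m·E[X₁]) equals (1/m)·( Σ_{k=1}^{m} C(m,k) (−1)^{k+1}/k − 1/m ), where C(m,k) denotes the binomial coefficient. -/
/-!
By independence, `P(max ≤ t) = (1 - e^{-λt})^m` and `P(min > t) = e^{-mλt}`. The layer-cake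
formula `E[Y] = ∫₀^∞ P(Y > t) dt` then gives `E[X₁] = 1/λ`, `E[min] = 1/(mλ)` and, after
expanding `1 - (1 - e^{-λt})^m` binomially, `E[max] = Σ_{k=1}^m C(m,k) (-1)^{k+1}/(kλ)`.
-/

open MeasureTheory ProbabilityTheory Set Real

lemma integral_Ioi_exp_neg_mul {c : ℝ} (hc : 0 < c) :
    ∫ t in Ioi 0, exp (-(c * t)) = c⁻¹ := by
  simpa [neg_mul] using integral_exp_mul_Ioi (neg_lt_zero.2 hc) 0

lemma integrableOn_Ioi_exp_neg_mul {c : ℝ} (hc : 0 < c) :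
    IntegrableOn (fun t => exp (-(c * t))) (Ioi 0) := by
  simpa only [neg_mul] using exp_neg_integrableOn_Ioi 0 hc

lemma one_sub_one_sub_pow {R : Type*} [CommRing R] (n : ℕ) (u : R) :
    1 - (1 - u) ^ n = ∑ k ∈ Finset.Icc 1 n, (n.choose k : R) * (-1) ^ (k + 1) * u ^ k := by
  rw [sub_eq_neg_add (1 : R) u, add_pow, Finset.range_eq_Ico,
    Finset.sum_eq_sum_Ico_succ_bot (by omega), Finset.Ico_add_one_right_eq_Icc]
  simp only [pow_zero, one_pow, mul_one, Nat.choose_zero_right, Nat.cast_one, zero_add,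
    sub_add_cancel_left, ← Finset.sum_neg_distrib]
  refine Finset.sum_congr rfl fun k _ => ?_
  rw [neg_pow, pow_succ]
  ring

lemma one_sub_one_sub_exp_pow (c t : ℝ) (n : ℕ) :
    1 - (1 - exp (-(c * t))) ^ n =
      ∑ k ∈ Finset.Icc 1 n, (n.choose k : ℝ) * (-1) ^ (k + 1) * exp (-(k * c * t)) := by
  simp_rw [one_sub_one_sub_pow, ← exp_nat_mul, mul_neg, mul_assoc]

lemma integrableOn_Ioi_one_sub_one_sub_exp_pow {c : ℝ} (hc : 0 < c) (n : ℕ) :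
    IntegrableOn (fun t => 1 - (1 - exp (-(c * t))) ^ n) (Ioi 0) := by
  simp_rw [one_sub_one_sub_exp_pow]
  exact integrable_finsetSum _ fun k hk => (integrableOn_Ioi_exp_neg_mul
    (mul_pos (Nat.cast_pos.2 (Finset.mem_Icc.1 hk).1) hc)).const_mul _

lemma integral_Ioi_one_sub_one_sub_exp_pow {c : ℝ} (hc : 0 < c) (n : ℕ) :
    ∫ t in Ioi 0, (1 - (1 - exp (-(c * t))) ^ n) =
      ∑ k ∈ Finset.Icc 1 n, (n.choose k : ℝ) * (-1) ^ (k + 1) / (k * c) := by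
  have hkc : ∀ k ∈ Finset.Icc 1 n, 0 < (k : ℝ) * c := fun k hk =>
    mul_pos (Nat.cast_pos.2 (Finset.mem_Icc.1 hk).1) hc
  simp_rw [one_sub_one_sub_exp_pow]
  rw [integral_finsetSum _ fun k hk => (integrableOn_Ioi_exp_neg_mul (hkc k hk)).const_mul _]
  refine Finset.sum_congr rfl fun k hk => ?_
  rw [integral_const_mul, integral_Ioi_exp_neg_mul (hkc k hk), div_eq_mul_inv]

section LayerCake

variable {Ω : Type*} [MeasurableSpace Ω] {μ : Measure Ω} {Y : Ω → ℝ} {g : ℝ → ℝ}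

lemma integrable_and_integral_eq_of_meas_lt_eq_ofReal (hY₀ : 0 ≤ᵐ[μ] Y)
    (hY : AEMeasurable Y μ)
    (hg : IntegrableOn g (Ioi 0)) (hg₀ : ∀ t > 0, 0 ≤ g t)
    (htail : ∀ t > 0, μ {ω | t < Y ω} = ENNReal.ofReal (g t)) :
    Integrable Y μ ∧ ∫ ω, Y ω ∂μ = ∫ t in Ioi 0, g t := by
  have hg₀' : 0 ≤ᵐ[volume.restrict (Ioi 0)] g :=
    (ae_restrict_iff' measurableSet_Ioi).2 (.of_forall hg₀)
  have hlintegral : ∫⁻ ω, ENNReal.ofReal (Y ω) ∂μ = ENNReal.ofReal (∫ t in Ioi 0, g t) := by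
    rw [lintegral_eq_lintegral_meas_lt μ hY₀ hY, setLIntegral_congr_fun measurableSet_Ioi htail,
      ofReal_integral_eq_lintegral_ofReal hg hg₀']
  refine ⟨⟨hY.aestronglyMeasurable, ?_⟩, ?_⟩
  · rw [hasFiniteIntegral_iff_ofReal hY₀, hlintegral]
    exact ENNReal.ofReal_lt_top
  · rw [integral_eq_lintegral_of_nonneg_ae hY₀ hY.aestronglyMeasurable, hlintegral,
      ENNReal.toReal_ofReal (setIntegral_nonneg_of_ae_restrict hg₀')]

end LayerCake

namespace ProbabilityTheory

section MaxMin

variable {Ω ι : Type*} [MeasurableSpace Ω] {μ : Measure Ω} [Fintype ι] [Nonempty ι]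
  {X : ι → Ω → ℝ} {ν : Measure ℝ}

lemma iIndepFun.measure_iSup_le (hX : ∀ i, Measurable (X i)) (hindep : iIndepFun X μ)
    (hident : ∀ i, μ.map (X i) = ν) (t : ℝ) :
    μ {ω | ⨆ i, X i ω ≤ t} = ν (Iic t) ^ Fintype.card ι := by
  have hset : {ω | ⨆ i, X i ω ≤ t} = ⋂ i, X i ⁻¹' Iic t := by
    ext ω
    simpa using ciSup_le_iff (Set.finite_range _).bddAbove
  rw [hset, hindep.meas_iInter fun i => ⟨Iic t, measurableSet_Iic, rfl⟩]
  simp_rw [← Measure.map_apply (hX _) measurableSet_Iic, hident, Finset.prod_const,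
    Finset.card_univ]

lemma iIndepFun.measure_lt_iInf (hX : ∀ i, Measurable (X i)) (hindep : iIndepFun X μ)
    (hident : ∀ i, μ.map (X i) = ν) (t : ℝ) :
    μ {ω | t < ⨅ i, X i ω} = ν (Ioi t) ^ Fintype.card ι := by
  have hset : {ω | t < ⨅ i, X i ω} = ⋂ i, X i ⁻¹' Ioi t := by
    ext ω
    simp [← Finset.inf'_univ_eq_ciInf, Finset.lt_inf'_iff]
  rw [hset, hindep.meas_iInter fun i => ⟨Ioi t, measurableSet_Ioi, rfl⟩]
  simp_rw [← Measure.map_apply (hX _) measurableSet_Ioi, hident, Finset.prod_const,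
    Finset.card_univ]

end MaxMin

section Exponential

variable {l t : ℝ}

lemma expMeasure_Iic (hl : 0 < l) (ht : 0 ≤ t) :
    expMeasure l (Iic t) = ENNReal.ofReal (1 - exp (-(l * t))) := by
  have := isProbabilityMeasure_expMeasure hl
  rw [← ofReal_cdf, cdf_expMeasure_eq hl, if_pos ht]

lemma expMeasure_Ioi (hl : 0 < l) (ht : 0 ≤ t) :
    expMeasure l (Ioi t) = ENNReal.ofReal (exp (-(l * t))) := by
  have := isProbabilityMeasure_expMeasure hl
  rw [← compl_Iic, prob_compl_eq_one_sub measurableSet_Iic, expMeasure_Iic hl ht,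
    ← ENNReal.ofReal_one, ← ENNReal.ofReal_sub _
      (sub_nonneg.2 (exp_le_one_iff.2 (neg_nonpos.2 (mul_nonneg hl.le ht)))), sub_sub_cancel]

lemma expMeasure_Iio_zero (l : ℝ) : expMeasure l (Iio 0) = 0 := by
  rw [expMeasure, gammaMeasure, withDensity_apply _ measurableSet_Iio]
  exact lintegral_exponentialPDF_of_nonpos le_rfl

end Exponential

section IIDExponential

variable {Ω ι : Type*} [MeasurableSpace Ω] {μ : Measure Ω} {l : ℝ}

lemma ae_nonneg_of_map_eq_expMeasure {Y : Ω → ℝ} (hY : Measurable Y)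
    (h : μ.map Y = expMeasure l) : 0 ≤ᵐ[μ] Y := by
  have : μ (Y ⁻¹' Iio 0) = 0 := by
    rw [← Measure.map_apply hY measurableSet_Iio, h, expMeasure_Iio_zero]
  filter_upwards [measure_eq_zero_iff_ae_notMem.1 this] with ω hω
  simpa using hω

lemma integral_of_map_eq_expMeasure (hl : 0 < l) {Y : Ω → ℝ} (hY : Measurable Y)
    (h : μ.map Y = expMeasure l) : ∫ ω, Y ω ∂μ = l⁻¹ := by
  rw [← integral_Ioi_exp_neg_mul hl]
  refine (integrable_and_integral_eq_of_meas_lt_eq_ofReal (ae_nonneg_of_map_eq_expMeasure hY h)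
    hY.aemeasurable (integrableOn_Ioi_exp_neg_mul hl) (fun t _ => (exp_pos _).le)
    fun t ht => ?_).2
  rw [← expMeasure_Ioi hl ht.le, ← h, Measure.map_apply hY measurableSet_Ioi]
  rfl

variable [Fintype ι] [Nonempty ι] {X : ι → Ω → ℝ}

lemma iIndepFun.integrable_and_integral_iSup_of_expMeasure [IsProbabilityMeasure μ]
    (hl : 0 < l) (hX : ∀ i, Measurable (X i)) (hindep : iIndepFun X μ)
    (hident : ∀ i, μ.map (X i) = expMeasure l) :
    Integrable (fun ω => ⨆ i, X i ω) μ ∧ ∫ ω, ⨆ i, X i ω ∂μ =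
      ∑ k ∈ Finset.Icc 1 (Fintype.card ι),
        ((Fintype.card ι).choose k : ℝ) * (-1) ^ (k + 1) / (k * l) := by
  rw [← integral_Ioi_one_sub_one_sub_exp_pow hl]
  have hnonneg : 0 ≤ᵐ[μ] fun ω => ⨆ i, X i ω := by
    obtain ⟨i⟩ := ‹Nonempty ι›
    filter_upwards [ae_nonneg_of_map_eq_expMeasure (hX i) (hident i)] with ω hω
    exact hω.trans (le_ciSup (f := fun i => X i ω) (Set.finite_range _).bddAbove i)
  refine integrable_and_integral_eq_of_meas_lt_eq_ofReal hnonneg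
    (Measurable.iSup hX).aemeasurable (integrableOn_Ioi_one_sub_one_sub_exp_pow hl _)
    (fun t ht => ?_) fun t ht => ?_
  all_goals have hexp : exp (-(l * t)) ≤ 1 := exp_le_one_iff.2 (neg_nonpos.2 (by positivity))
  · exact sub_nonneg.2 (pow_le_one₀ (sub_nonneg.2 hexp) (sub_le_self _ (exp_pos _).le))
  · have hset : {ω | t < ⨆ i, X i ω} = {ω | ⨆ i, X i ω ≤ t}ᶜ := by
      ext
      simp
    rw [hset, prob_compl_eq_one_sub (s := {ω | ⨆ i, X i ω ≤ t})
        (Measurable.iSup hX measurableSet_Iic),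
      hindep.measure_iSup_le hX hident, expMeasure_Iic hl ht.le,
      ← ENNReal.ofReal_pow (sub_nonneg.2 hexp), ← ENNReal.ofReal_one,
      ← ENNReal.ofReal_sub _ (by positivity)]

lemma iIndepFun.integrable_and_integral_iInf_of_expMeasure (hl : 0 < l)
    (hX : ∀ i, Measurable (X i)) (hindep : iIndepFun X μ)
    (hident : ∀ i, μ.map (X i) = expMeasure l) :
    Integrable (fun ω => ⨅ i, X i ω) μ ∧ ∫ ω, ⨅ i, X i ω ∂μ = (Fintype.card ι * l)⁻¹ := by
  have hnl : 0 < Fintype.card ι * l := mul_pos (Nat.cast_pos.2 Fintype.card_pos) hl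
  rw [← integral_Ioi_exp_neg_mul hnl]
  have hnonneg : 0 ≤ᵐ[μ] fun ω => ⨅ i, X i ω := by
    filter_upwards [ae_all_iff.2 fun i => ae_nonneg_of_map_eq_expMeasure (hX i) (hident i)]
      with ω hω
    exact le_ciInf hω
  refine integrable_and_integral_eq_of_meas_lt_eq_ofReal hnonneg
    (Measurable.iInf hX).aemeasurable (integrableOn_Ioi_exp_neg_mul hnl)
    (fun t _ => (exp_pos _).le) fun t ht => ?_
  rw [hindep.measure_lt_iInf hX hident, expMeasure_Ioi hl ht.le,
    ← ENNReal.ofReal_pow (exp_pos _).le, ← exp_nat_mul]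
  ring_nf

end IIDExponential

end ProbabilityTheory

/-- For i.i.d. `X₁,…,Xₘ` (`m ≥ 2`) with the exponential distribution of rate
`λ > 0`, the `m`-th Gini index `E[max − min]/(m E[X₁])` equals
`(1/m)(Σ_{k=1}^m C(m,k)(−1)^{k+1}/k − 1/m)`. -/
theorem mth_Gini_index_exponential
    {Ω : Type*} [MeasureSpace Ω] [IsProbabilityMeasure (ℙ : Measure Ω)]
    (m : ℕ) (hm : 2 ≤ m) (l : ℝ) (hl : 0 < l) (X : Fin m → Ω → ℝ)
    (hmeas : ∀ i, Measurable (X i))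
    (hindep : iIndepFun X ℙ)
    (hident : ∀ i, Measure.map (X i) ℙ = expMeasure l) :
    (∫ ω, ((⨆ i, X i ω) - ⨅ i, X i ω) ∂ℙ) /
        (m * ∫ ω, X ⟨0, by omega⟩ ω ∂ℙ) =
      (1 / m) * ((∑ k ∈ Finset.Icc 1 m, (m.choose k : ℝ) * (-1) ^ (k + 1) / k) - 1 / m) := by
  have : Nonempty (Fin m) := ⟨⟨0, by omega⟩⟩
  obtain ⟨hmax_int, hmax⟩ := hindep.integrable_and_integral_iSup_of_expMeasure hl hmeas hident
  obtain ⟨hmin_int, hmin⟩ := hindep.integrable_and_integral_iInf_of_expMeasure hl hmeas hident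
  rw [integral_sub hmax_int hmin_int, hmax, hmin,
    integral_of_map_eq_expMeasure hl (hmeas _) (hident _), Fintype.card_fin]
  simp_rw [← div_div, ← Finset.sum_div]
  field_simp
end

section
/- For every α > 0, ∫₀^∞ ( Γ(α)² − γ(α,s)² ) ds = α Γ(α)² + Γ(2α+1)/(2^{2α} α), where γ(α,s) = ∫₀^s t^{α−1} e^{−t} dt is the lower incomplete gamma function and Γ is the gamma function. -/
open MeasureTheory Set

/-- The lower incomplete gamma function `γ(a, x) = ∫₀^x t^(a−1) e^(−t) dt`. -/
noncomputable def lowerIncompleteGamma (a x : ℝ) : ℝ :=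
  ∫ t in Ioc (0 : ℝ) x, t ^ (a - 1) * Real.exp (-t)

/-!
Write `f = gammaIntegrand a` and `γ = lowerIncompleteGamma a`, so that `γ' = f` and
`t f(t) = gammaIntegrand (a + 1) t`. Since `d/ds [s (Γ² − γ(s)²) + 2 ∫₀ˢ t f γ] = Γ² − γ(s)² ≥ 0`,
the integral equals `2 ∫₀^∞ t f γ`; the boundary term at infinity vanishes because
`s (Γ(a) − γ(a, s)) ≤ Γ(a + 1) − γ(a + 1, s)`. Next,
`d/dt [t^a e^(-t) γ(t)] = (a − t) f γ + t^(2a−1) e^(−2t)` gives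
`∫ t f γ = a ∫ f γ + ∫ t^(2a−1) e^(−2t) = a Γ²/2 + Γ(2a)/2^(2a)`, using `∫ f γ = [γ²/2]₀^∞`.
-/

open Real Filter Topology

section Primitive

variable {k : ℝ → ℝ} {a : ℝ}

theorem hasDerivAt_integral_Ioc (hk : IntegrableOn k (Ioi a)) {x : ℝ} (hx : a < x)
    (hc : ContinuousAt k x) : HasDerivAt (fun y => ∫ t in Ioc a y, k t) (k x) x := by
  have hderiv : HasDerivAt (fun y => ∫ t in a..y, k t) (k x) x :=
    intervalIntegral.integral_hasDerivAt_right
      ((intervalIntegrable_iff_integrableOn_Ioc_of_le hx.le).2 (hk.mono_set Ioc_subset_Ioi_self))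
      ⟨Ioi a, Ioi_mem_nhds hx, hk.aestronglyMeasurable⟩ hc
  refine hderiv.congr_of_eventuallyEq ?_
  filter_upwards [Ioi_mem_nhds hx] with y hy
  exact (intervalIntegral.integral_of_le hy.le).symm

theorem continuousWithinAt_integral_Ioc (hk : IntegrableOn k (Ioi a)) :
    ContinuousWithinAt (fun y => ∫ t in Ioc a y, k t) (Ici a) a := by
  have hcont : ContinuousOn (fun y => ∫ t in a..y, k t) (Icc a (a + 1)) := by
    have := intervalIntegral.continuousOn_primitive_interval' (μ := volume) (b₁ := a)
      (b₂ := a + 1) ((intervalIntegrable_iff_integrableOn_Ioc_of_le (by linarith)).2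
        (hk.mono_set Ioc_subset_Ioi_self)) left_mem_uIcc
    rwa [uIcc_of_le (by linarith)] at this
  refine ((hcont a (left_mem_Icc.2 (by linarith))).mono_of_mem_nhdsWithin
    (Icc_mem_nhdsGE (by linarith))).congr (fun y hy => ?_) ?_
  · exact (intervalIntegral.integral_of_le hy).symm
  · simp

theorem tendsto_integral_Ioc_atTop (hk : IntegrableOn k (Ioi a)) :
    Tendsto (fun y => ∫ t in Ioc a y, k t) atTop (𝓝 (∫ t in Ioi a, k t)) := by
  refine (intervalIntegral_tendsto_integral_Ioi a hk tendsto_id).congr' ?_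
  filter_upwards [eventually_ge_atTop a] with y hy
  exact intervalIntegral.integral_of_le hy

end Primitive

section GammaIntegrand

noncomputable def gammaIntegrand (a t : ℝ) : ℝ := t ^ (a - 1) * exp (-t)

variable {a t : ℝ}

theorem gammaIntegrand_nonneg (ht : 0 ≤ t) : 0 ≤ gammaIntegrand a t :=
  mul_nonneg (rpow_nonneg ht _) (exp_pos _).le

theorem continuousAt_gammaIntegrand (h : t ≠ 0 ∨ 1 ≤ a) : ContinuousAt (gammaIntegrand a) t :=
  (continuousAt_rpow_const t _ (h.imp_right sub_nonneg.2)).mul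
    (continuous_exp.comp continuous_neg).continuousAt

theorem tendsto_gammaIntegrand_atTop (a : ℝ) : Tendsto (gammaIntegrand a) atTop (𝓝 0) := by
  refine (tendsto_rpow_mul_exp_neg_mul_atTop_nhds_zero (a - 1) 1 one_pos).congr fun t => ?_
  simp [gammaIntegrand]

theorem integrableOn_gammaIntegrand (ha : 0 < a) : IntegrableOn (gammaIntegrand a) (Ioi 0) :=
  (GammaIntegral_convergent ha).congr_fun (fun _ _ => mul_comm _ _) measurableSet_Ioi

theorem integral_gammaIntegrand (ha : 0 < a) : ∫ t in Ioi 0, gammaIntegrand a t = Gamma a := by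
  rw [Gamma_eq_integral ha]
  exact setIntegral_congr_fun measurableSet_Ioi (fun _ _ => mul_comm _ _)

theorem mul_gammaIntegrand (ht : 0 < t) : t * gammaIntegrand a t = gammaIntegrand (a + 1) t := by
  rw [gammaIntegrand, gammaIntegrand, add_sub_cancel_right]
  conv_rhs => rw [← sub_add_cancel a 1, rpow_add_one ht.ne']
  ring

theorem hasDerivAt_gammaIntegrand_add_one (ht : 0 < t) :
    HasDerivAt (gammaIntegrand (a + 1)) ((a - t) * gammaIntegrand a t) t := by
  have hpow : HasDerivAt (fun x => x ^ a) (a * t ^ (a - 1)) t :=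
    hasDerivAt_rpow_const (Or.inl ht.ne')
  have hexp : HasDerivAt (fun x => exp (-x)) (-exp (-t)) t := by
    simpa using (hasDerivAt_neg t).exp
  have hfun : gammaIntegrand (a + 1) = fun x => x ^ a * exp (-x) := by
    ext x; simp [gammaIntegrand]
  rw [hfun]
  refine (hpow.mul hexp).congr_deriv ?_
  rw [sub_mul, mul_gammaIntegrand ht, hfun, gammaIntegrand]
  ring

theorem gammaIntegrand_add_one_mul_gammaIntegrand (ht : 0 < t) :
    gammaIntegrand (a + 1) t * gammaIntegrand a t = t ^ (2 * a - 1) * exp (-(2 * t)) := by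
  rw [gammaIntegrand, gammaIntegrand, add_sub_cancel_right, mul_mul_mul_comm, ← rpow_add ht,
    ← exp_add]
  ring_nf

end GammaIntegrand

section LowerIncompleteGamma

variable {a x : ℝ}

theorem lowerIncompleteGamma_eq_integral (a x : ℝ) :
    lowerIncompleteGamma a x = ∫ t in Ioc 0 x, gammaIntegrand a t := rfl

@[simp]
theorem lowerIncompleteGamma_zero (a : ℝ) : lowerIncompleteGamma a 0 = 0 := by
  simp [lowerIncompleteGamma]

theorem lowerIncompleteGamma_nonneg (a x : ℝ) : 0 ≤ lowerIncompleteGamma a x :=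
  setIntegral_nonneg measurableSet_Ioc (fun _ ht => gammaIntegrand_nonneg ht.1.le)

theorem lowerIncompleteGamma_mono (ha : 0 < a) : Monotone (lowerIncompleteGamma a) :=
  fun _ _ hxy => setIntegral_mono_set
    ((integrableOn_gammaIntegrand ha).mono_set Ioc_subset_Ioi_self)
    ((ae_restrict_iff' measurableSet_Ioc).2
      (ae_of_all _ fun _ ht => gammaIntegrand_nonneg ht.1.le))
    (Ioc_subset_Ioc_right hxy).eventuallyLE

theorem hasDerivAt_lowerIncompleteGamma (ha : 0 < a) (hx : 0 < x) :
    HasDerivAt (lowerIncompleteGamma a) (gammaIntegrand a x) x :=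
  hasDerivAt_integral_Ioc (integrableOn_gammaIntegrand ha) hx
    (continuousAt_gammaIntegrand (Or.inl hx.ne'))

theorem continuousWithinAt_lowerIncompleteGamma_zero (ha : 0 < a) :
    ContinuousWithinAt (lowerIncompleteGamma a) (Ici 0) 0 :=
  continuousWithinAt_integral_Ioc (integrableOn_gammaIntegrand ha)

theorem tendsto_lowerIncompleteGamma_atTop (ha : 0 < a) :
    Tendsto (lowerIncompleteGamma a) atTop (𝓝 (Gamma a)) := by
  rw [← integral_gammaIntegrand ha]
  exact tendsto_integral_Ioc_atTop (integrableOn_gammaIntegrand ha)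

theorem lowerIncompleteGamma_le_Gamma (ha : 0 < a) (x : ℝ) :
    lowerIncompleteGamma a x ≤ Gamma a :=
  (lowerIncompleteGamma_mono ha).ge_of_tendsto (tendsto_lowerIncompleteGamma_atTop ha) x

theorem Gamma_sub_lowerIncompleteGamma (ha : 0 < a) (hx : 0 ≤ x) :
    Gamma a - lowerIncompleteGamma a x = ∫ t in Ioi x, gammaIntegrand a t := by
  rw [← integral_gammaIntegrand ha, lowerIncompleteGamma_eq_integral, sub_eq_iff_eq_add',
    ← setIntegral_union (Ioc_disjoint_Ioi le_rfl) measurableSet_Ioi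
      ((integrableOn_gammaIntegrand ha).mono_set Ioc_subset_Ioi_self)
      ((integrableOn_gammaIntegrand ha).mono_set (Ioi_subset_Ioi hx)),
    Ioc_union_Ioi_eq_Ioi hx]

theorem mul_Gamma_sub_lowerIncompleteGamma_le (ha : 0 < a) (hx : 0 ≤ x) :
    x * (Gamma a - lowerIncompleteGamma a x)
      ≤ Gamma (a + 1) - lowerIncompleteGamma (a + 1) x := by
  have ha' : 0 < a + 1 := by linarith
  rw [Gamma_sub_lowerIncompleteGamma ha hx, Gamma_sub_lowerIncompleteGamma ha' hx,
    ← integral_const_mul]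
  refine setIntegral_mono_on
    (((integrableOn_gammaIntegrand ha).mono_set (Ioi_subset_Ioi hx)).const_mul x)
    ((integrableOn_gammaIntegrand ha').mono_set (Ioi_subset_Ioi hx)) measurableSet_Ioi
    fun t ht => ?_
  rw [← mul_gammaIntegrand (hx.trans_lt ht)]
  exact mul_le_mul_of_nonneg_right ht.le (gammaIntegrand_nonneg (hx.trans ht.le))

theorem tendsto_mul_Gamma_sub_lowerIncompleteGamma_atTop (ha : 0 < a) :
    Tendsto (fun x => x * (Gamma a - lowerIncompleteGamma a x)) atTop (𝓝 0) := by
  have hbound :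
      Tendsto (fun x => Gamma (a + 1) - lowerIncompleteGamma (a + 1) x) atTop (𝓝 0) := by
    simpa using (tendsto_lowerIncompleteGamma_atTop (a := a + 1) (by linarith)).const_sub
      (Gamma (a + 1))
  refine squeeze_zero' ?_ ?_ hbound
  · filter_upwards [eventually_ge_atTop 0] with x hx
    exact mul_nonneg hx (sub_nonneg.2 (lowerIncompleteGamma_le_Gamma ha x))
  · filter_upwards [eventually_ge_atTop 0] with x hx
    exact mul_Gamma_sub_lowerIncompleteGamma_le ha hx

theorem integrableOn_mul_lowerIncompleteGamma {k : ℝ → ℝ} (hk : IntegrableOn k (Ioi 0))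
    (ha : 0 < a) : IntegrableOn (fun t => k t * lowerIncompleteGamma a t) (Ioi 0) :=
  hk.mul_bdd (lowerIncompleteGamma_mono ha).measurable.aestronglyMeasurable
    (ae_of_all _ fun t => by
      rw [norm_of_nonneg (lowerIncompleteGamma_nonneg a t)]
      exact lowerIncompleteGamma_le_Gamma ha t)

end LowerIncompleteGamma

section Integrals

variable {a : ℝ}

theorem integral_gammaIntegrand_mul_lowerIncompleteGamma (ha : 0 < a) :
    ∫ t in Ioi 0, gammaIntegrand a t * lowerIncompleteGamma a t = Gamma a ^ 2 / 2 := by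
  have hγ := continuousWithinAt_lowerIncompleteGamma_zero ha
  have hftc := integral_Ioi_of_hasDerivAt_of_nonneg ((hγ.pow 2).div_const 2)
    (fun x hx => (((hasDerivAt_lowerIncompleteGamma ha hx).pow 2).div_const 2).congr_deriv
      (by ring))
    (fun x hx => mul_nonneg (gammaIntegrand_nonneg (le_of_lt hx)) (lowerIncompleteGamma_nonneg a x))
    (((tendsto_lowerIncompleteGamma_atTop ha).pow 2).div_const 2)
  simpa using hftc

theorem integral_gammaIntegrand_add_one_mul_lowerIncompleteGamma (ha : 0 < a) :
    ∫ t in Ioi 0, gammaIntegrand (a + 1) t * lowerIncompleteGamma a t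
      = a * (Gamma a ^ 2 / 2) + Gamma (2 * a) / 2 ^ (2 * a) := by
  have hI₁ := integrableOn_mul_lowerIncompleteGamma (integrableOn_gammaIntegrand ha) ha
  have hI₂ := integrableOn_mul_lowerIncompleteGamma
    (integrableOn_gammaIntegrand (a := a + 1) (by linarith)) ha
  have hexp := integral_rpow_mul_exp_neg_mul_Ioi (a := 2 * a) (by linarith) two_pos
  have hI₃ : IntegrableOn (fun t : ℝ => t ^ (2 * a - 1) * exp (-(2 * t))) (Ioi 0) := by
    refine .of_integral_ne_zero ?_
    have := Gamma_pos_of_pos (by linarith : 0 < 2 * a)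
    rw [hexp]
    positivity
  have hI₁₂ : IntegrableOn (fun x => a * (gammaIntegrand a x * lowerIncompleteGamma a x)
      - gammaIntegrand (a + 1) x * lowerIncompleteGamma a x) (Ioi 0) :=
    (hI₁.const_mul a).sub hI₂
  have hcont : ContinuousWithinAt (fun x => gammaIntegrand (a + 1) x * lowerIncompleteGamma a x)
      (Ici 0) 0 :=
    (continuousAt_gammaIntegrand (Or.inr (by linarith))).continuousWithinAt.mul
      (continuousWithinAt_lowerIncompleteGamma_zero ha)
  have hlim : Tendsto (fun x => gammaIntegrand (a + 1) x * lowerIncompleteGamma a x) atTop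
      (𝓝 0) := by
    simpa using (tendsto_gammaIntegrand_atTop (a + 1)).mul (tendsto_lowerIncompleteGamma_atTop ha)
  have hftc : ∫ x in Ioi 0, (a * (gammaIntegrand a x * lowerIncompleteGamma a x)
      - gammaIntegrand (a + 1) x * lowerIncompleteGamma a x + x ^ (2 * a - 1) * exp (-(2 * x)))
      = 0 - gammaIntegrand (a + 1) 0 * lowerIncompleteGamma a 0 :=
    integral_Ioi_of_hasDerivAt_of_tendsto hcont
      (fun x hx => ((hasDerivAt_gammaIntegrand_add_one hx).mul
        (hasDerivAt_lowerIncompleteGamma ha hx)).congr_deriv (by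
          rw [← gammaIntegrand_add_one_mul_gammaIntegrand hx, ← mul_gammaIntegrand hx]; ring))
      (hI₁₂.add hI₃) hlim
  rw [integral_add hI₁₂ hI₃, integral_sub (hI₁.const_mul a) hI₂,
    integral_const_mul, integral_gammaIntegrand_mul_lowerIncompleteGamma ha, hexp, one_div,
    inv_rpow zero_le_two, inv_mul_eq_div, lowerIncompleteGamma_zero, mul_zero, sub_zero] at hftc
  linarith

theorem integral_Gamma_sq_sub_lowerIncompleteGamma_sq_eq_two_mul (ha : 0 < a) :
    ∫ s in Ioi 0, (Gamma a ^ 2 - lowerIncompleteGamma a s ^ 2)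
      = 2 * ∫ t in Ioi 0, gammaIntegrand (a + 1) t * lowerIncompleteGamma a t := by
  set γ := lowerIncompleteGamma a
  set k := fun t => gammaIntegrand (a + 1) t * γ t
  have hk : IntegrableOn k (Ioi 0) := integrableOn_mul_lowerIncompleteGamma
    (integrableOn_gammaIntegrand (a := a + 1) (by linarith)) ha
  have hcont : ContinuousWithinAt (fun s => s * (Gamma a ^ 2 - γ s ^ 2)
      + 2 * ∫ t in Ioc 0 s, k t) (Ici 0) 0 :=
    (continuousWithinAt_id.mul (continuousWithinAt_const.sub
      ((continuousWithinAt_lowerIncompleteGamma_zero ha).pow 2))).add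
      ((continuousWithinAt_integral_Ioc hk).const_mul 2)
  have hderiv (s : ℝ) (hs : s ∈ Ioi 0) : HasDerivAt (fun s => s * (Gamma a ^ 2 - γ s ^ 2)
      + 2 * ∫ t in Ioc 0 s, k t) (Gamma a ^ 2 - γ s ^ 2) s := by
    have hγ := hasDerivAt_lowerIncompleteGamma ha hs
    have hk_cont : ContinuousAt k s :=
      (continuousAt_gammaIntegrand (Or.inl (ne_of_gt hs))).mul hγ.continuousAt
    refine (((hasDerivAt_id s).mul ((hasDerivAt_const s _).sub (hγ.pow 2))).add
      ((hasDerivAt_integral_Ioc hk hs hk_cont).const_mul 2)).congr_deriv ?_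
    simp only [k, γ, Pi.sub_apply, Pi.pow_apply, id_eq, ← mul_gammaIntegrand hs]
    ring
  have hnonneg (s : ℝ) (_ : s ∈ Ioi 0) : 0 ≤ Gamma a ^ 2 - γ s ^ 2 :=
    sub_nonneg.2 (pow_le_pow_left₀ (lowerIncompleteGamma_nonneg a s)
      (lowerIncompleteGamma_le_Gamma ha s) 2)
  have hlim : Tendsto (fun s => s * (Gamma a ^ 2 - γ s ^ 2) + 2 * ∫ t in Ioc 0 s, k t) atTop
      (𝓝 (0 * (Gamma a + Gamma a) + 2 * ∫ t in Ioi 0, k t)) := by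
    refine Tendsto.add ?_ ((tendsto_integral_Ioc_atTop hk).const_mul 2)
    refine ((tendsto_mul_Gamma_sub_lowerIncompleteGamma_atTop ha).mul
      ((tendsto_lowerIncompleteGamma_atTop ha).const_add (Gamma a))).congr fun s => ?_
    ring
  simpa [γ] using integral_Ioi_of_hasDerivAt_of_nonneg hcont hderiv hnonneg hlim

end Integrals

/-- For `α > 0`,
`∫₀^∞ (Γ(α)² − γ(α,s)²) ds = α Γ(α)² + Γ(2α+1)/(2^(2α) α)`. -/
theorem integral_Gamma_sq_sub_lowerIncompleteGamma_sq (α : ℝ) (hα : 0 < α) :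
    ∫ s in Ioi (0 : ℝ), (Real.Gamma α ^ 2 - lowerIncompleteGamma α s ^ 2) =
      α * Real.Gamma α ^ 2 + Real.Gamma (2 * α + 1) / ((2 : ℝ) ^ (2 * α) * α) := by
  rw [integral_Gamma_sq_sub_lowerIncompleteGamma_sq_eq_two_mul hα,
    integral_gammaIntegrand_add_one_mul_lowerIncompleteGamma hα,
    Gamma_add_one (by positivity : 2 * α ≠ 0)]
  field_simp
end

section
/- Let X₁ and X₂ be i.i.d. random variables with the Gamma(α, λ) distribution (α, λ > 0). Then the classical Gini index G = E[|X₁ − X₂|]/(2·E[X₁]) equals Γ(α + 1/2)/(√π · α · Γ(α)), where Γ is the gamma function. -/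
/-!
By symmetry `E|X₁ - X₂| = 2 E (X₁ - X₂)⁺`. In the double integral of `(x - y)⁺` against the
product of two Gamma densities substitute `y = t x` (`0 < t ≤ 1`). For fixed `t` the
`x`-integral is the Gamma integral `∫₀^∞ x^{2α} e^{-λ(1+t)x} dx = Γ(2α+1) / (λ(1+t))^{2α+1}`,
which leaves `∫₀¹ t^{α-1} (1-t) (1+t)^{-(2α+1)} dt = 2^{-2α} / α`, with antiderivative
`t^α (1+t)^{-2α} / α`. Legendre's duplication formula turns `Γ(2α+1) 2^{-2α}` into
`α Γ(α) Γ(α + 1/2) / √π`. The double integral is computed in `ℝ≥0∞`, where Tonelli needs no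
integrability hypotheses.
-/

open MeasureTheory ProbabilityTheory Set Real
open scoped ENNReal

lemma lintegral_eq_ofReal_mul_lintegral_comp_mul_left (g : ℝ → ℝ≥0∞) {c : ℝ}
    (hc : 0 < c) :
    ∫⁻ y, g y = ENNReal.ofReal c * ∫⁻ t, g (c * t) := by
  conv_lhs => rw [← Real.smul_map_volume_mul_left hc.ne', abs_of_pos hc]
  rw [lintegral_smul_measure, smul_eq_mul, (measurableEmbedding_mulLeft₀ hc.ne').lintegral_map]

lemma lintegral_eq_setLIntegral_Ioi_of_eq_zero {g : ℝ → ℝ≥0∞} (hg : ∀ x < 0, g x = 0) :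
    ∫⁻ x, g x = ∫⁻ x in Ioi 0, g x := by
  rw [Measure.restrict_congr_set Ioi_ae_eq_Ici, setLIntegral_eq_of_support_subset]
  intro x hx
  by_contra hneg
  exact hx (hg x (not_le.mp hneg))

lemma lintegral_ofReal_mul_rpow_mul_exp_neg_mul_Ioi (A : ℝ) {s b : ℝ} (hs : 0 < s)
    (hb : 0 < b) :
    ∫⁻ x in Ioi 0, ENNReal.ofReal (A * (x ^ (s - 1) * exp (-(b * x))))
      = ENNReal.ofReal (A * ((1 / b) ^ s * Gamma s)) := by
  have hint : IntegrableOn (fun x : ℝ => x ^ (s - 1) * exp (-(b * x))) (Ioi 0) := by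
    refine (integrableOn_rpow_mul_exp_neg_mul_rpow (s := s - 1) (by linarith) zero_lt_one
      hb).congr_fun (fun x _ => ?_) measurableSet_Ioi
    simp only [rpow_one, neg_mul]
  have hnonneg : 0 ≤ᵐ[volume.restrict (Ioi 0)] fun x : ℝ => x ^ (s - 1) * exp (-(b * x)) :=
    (ae_restrict_iff' measurableSet_Ioi).2 (ae_of_all _ fun x (hx : 0 < x) => by positivity)
  rw [setLIntegral_congr_fun measurableSet_Ioi fun x (hx : 0 < x) =>
      ENNReal.ofReal_mul' (by positivity), lintegral_const_mul _ (by fun_prop),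
    ← ofReal_integral_eq_lintegral_ofReal hint hnonneg, integral_rpow_mul_exp_neg_mul_Ioi hs hb,
    ← ENNReal.ofReal_mul' (by positivity)]

lemma continuousOn_one_add_rpow (p : ℝ) : ContinuousOn (fun t : ℝ => (1 + t) ^ p) (Icc 0 1) :=
  ContinuousOn.rpow_const (f := fun t => 1 + t) (by fun_prop) fun t ht =>
    Or.inl (by linarith [ht.1])

lemma intervalIntegrable_rpow_mul_one_sub_mul_one_add_rpow {a : ℝ} (ha : 0 < a) (p : ℝ) :
    IntervalIntegrable (fun t : ℝ => t ^ (a - 1) * (1 - t) * (1 + t) ^ p) volume 0 1 := by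
  simp_rw [mul_assoc]
  refine (intervalIntegral.intervalIntegrable_rpow' (r := a - 1) (by linarith)).mul_continuousOn
    ?_
  rw [uIcc_of_le zero_le_one]
  exact (continuousOn_const.sub continuousOn_id).mul (continuousOn_one_add_rpow p)

lemma integral_rpow_mul_one_sub_mul_one_add_rpow {a : ℝ} (ha : 0 < a) :
    ∫ t in (0 : ℝ)..1, t ^ (a - 1) * (1 - t) * (1 + t) ^ (-(2 * a + 1)) = 2 ^ (-(2 * a)) / a := by
  rw [intervalIntegral.integral_eq_sub_of_hasDerivAt_of_le
    (f := fun t => t ^ a * (1 + t) ^ (-(2 * a)) / a) zero_le_one ?cont ?deriv ?int]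
  case cont =>
    exact ((continuousOn_id.rpow_const fun _ _ => Or.inr ha.le).mul
      (continuousOn_one_add_rpow _)).div_const a
  case deriv =>
    intro t ⟨ht0, _⟩
    have h1t : 0 < 1 + t := by linarith
    refine ((((hasDerivAt_id' t).rpow_const (p := a) (Or.inl ht0.ne')).mul
      (((hasDerivAt_id' t).const_add 1).rpow_const (p := -(2 * a)) (Or.inl h1t.ne'))).div_const
        a).congr_deriv ?_
    rw [show -(2 * a) - 1 = -(2 * a + 1) by ring,
      show t ^ a = t ^ (a - 1) * t by rw [← rpow_add_one ht0.ne', sub_add_cancel],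
      show (1 + t) ^ (-(2 * a)) = (1 + t) ^ (-(2 * a + 1)) * (1 + t) by
        rw [← rpow_add_one h1t.ne']; ring_nf]
    field_simp
    ring
  case int => exact intervalIntegrable_rpow_mul_one_sub_mul_one_add_rpow ha _
  norm_num [zero_rpow ha.ne']

lemma lintegral_Ioi_ofReal_mul_rpow_mul_one_sub_mul_one_add_rpow {a D : ℝ} (ha : 0 < a)
    (hD : 0 ≤ D) :
    ∫⁻ t in Ioi 0, ENNReal.ofReal (D * (t ^ (a - 1) * (1 - t) * (1 + t) ^ (-(2 * a + 1))))
      = ENNReal.ofReal (D * (2 ^ (-(2 * a)) / a)) := by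
  have hint := ((intervalIntegrable_rpow_mul_one_sub_mul_one_add_rpow ha (-(2 * a + 1))).const_mul
    D).def'
  rw [uIoc_of_le zero_le_one] at hint
  have hnonneg : 0 ≤ᵐ[volume.restrict (Ioc 0 1)] fun t : ℝ =>
      D * (t ^ (a - 1) * (1 - t) * (1 + t) ^ (-(2 * a + 1))) :=
    (ae_restrict_iff' measurableSet_Ioc).2 (ae_of_all _ fun t ⟨ht0, ht1⟩ => by
      have : 0 ≤ 1 - t := by linarith
      positivity)
  rw [← Ioc_union_Ioi_eq_Ioi zero_le_one, lintegral_union measurableSet_Ioi Ioc_disjoint_Ioi_same,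
    setLIntegral_congr_fun measurableSet_Ioi fun t (ht : 1 < t) => ENNReal.ofReal_of_nonpos ?neg,
    lintegral_zero, add_zero, ← ofReal_integral_eq_lintegral_ofReal hint hnonneg,
    integral_const_mul, ← intervalIntegral.integral_of_le zero_le_one,
    integral_rpow_mul_one_sub_mul_one_add_rpow ha]
  case neg =>
    exact mul_nonpos_of_nonneg_of_nonpos hD (mul_nonpos_of_nonpos_of_nonneg
      (mul_nonpos_of_nonneg_of_nonpos (by positivity) (by linarith)) (by positivity))

lemma Gamma_two_mul_add_one_mul_two_rpow_neg {a : ℝ} (ha : 0 < a) :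
    Gamma (2 * a + 1) * 2 ^ (-(2 * a)) = a * Gamma a * Gamma (a + 1 / 2) / √π := by
  rw [mul_assoc a, Gamma_mul_Gamma_add_half_of_pos ha, Gamma_add_one (by positivity),
    show (1 : ℝ) - 2 * a = -(2 * a) + 1 by ring, rpow_add_one two_ne_zero]
  field_simp

lemma lintegral_prod_ofReal_abs_sub (μ : Measure ℝ) [SFinite μ] :
    ∫⁻ p, ENNReal.ofReal |p.1 - p.2| ∂μ.prod μ
      = 2 * ∫⁻ p, ENNReal.ofReal (p.1 - p.2) ∂μ.prod μ := by
  have hsplit (x y : ℝ) :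
      ENNReal.ofReal |x - y| = ENNReal.ofReal (x - y) + ENNReal.ofReal (y - x) := by
    rcases le_total x y with h | h
    · rw [abs_of_nonpos (sub_nonpos.2 h), neg_sub, ENNReal.ofReal_of_nonpos (sub_nonpos.2 h),
        zero_add]
    · rw [abs_of_nonneg (sub_nonneg.2 h), ENNReal.ofReal_of_nonpos (sub_nonpos.2 h), add_zero]
  simp_rw [hsplit]
  rw [lintegral_add_left (by fun_prop), two_mul]
  congr 1
  exact lintegral_prod_swap (fun p : ℝ × ℝ => ENNReal.ofReal (p.1 - p.2))

lemma IndepFun.integral_comp_eq_integral_prod {Ω α β : Type*} [MeasurableSpace Ω]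
    [MeasurableSpace α] [MeasurableSpace β] {μ : Measure Ω} [IsFiniteMeasure μ]
    {X : Ω → α} {Y : Ω → β} (hX : Measurable X) (hY : Measurable Y) (hXY : IndepFun X Y μ)
    {g : α × β → ℝ} (hg : Measurable g) :
    ∫ ω, g (X ω, Y ω) ∂μ = ∫ p, g p ∂(μ.map X).prod (μ.map Y) := by
  rw [← hXY.map_prod_eq_prod_map_map hX.aemeasurable hY.aemeasurable,
    integral_map (hX.prodMk hY).aemeasurable hg.aestronglyMeasurable]

section Gamma

variable {a r : ℝ}

@[fun_prop]
lemma measurable_gammaPDF (a r : ℝ) : Measurable (gammaPDF a r) :=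
  (measurable_gammaPDFReal a r).ennreal_ofReal

lemma integral_id_gammaMeasure (ha : 0 < a) (hr : 0 < r) :
    ∫ x, x ∂gammaMeasure a r = a / r := by
  have hmoment (x : ℝ) (hx : 0 < x) :
      gammaPDFReal a r x * x = r ^ a / Gamma a * (x ^ (a + 1 - 1) * exp (-(r * x))) := by
    rw [gammaPDFReal, if_pos hx.le, add_sub_cancel_right,
      show x ^ a = x ^ (a - 1) * x by rw [← rpow_add_one hx.ne', sub_add_cancel]]
    ring
  rw [gammaMeasure, integral_withDensity_eq_integral_toReal_smul (measurable_gammaPDF a r)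
    (ae_of_all _ fun _ => ENNReal.ofReal_lt_top)]
  simp_rw [gammaPDF, ENNReal.toReal_ofReal (gammaPDFReal_nonneg ha hr _), smul_eq_mul]
  rw [← setIntegral_eq_integral_of_forall_compl_eq_zero (s := Ici 0) fun x (hx : ¬0 ≤ x) => by
      simp [gammaPDFReal, hx],
    integral_Ici_eq_integral_Ioi, setIntegral_congr_fun measurableSet_Ioi hmoment,
    integral_const_mul, integral_rpow_mul_exp_neg_mul_Ioi (by linarith) hr, Gamma_add_one ha.ne',
    rpow_add_one (by positivity), one_div, inv_rpow hr.le]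
  have : Gamma a ≠ 0 := (Gamma_pos_of_pos ha).ne'
  field_simp

lemma gammaPDF_mul_lintegral_gammaPDF_mul_ofReal_sub (ha : 0 < a) (hr : 0 < r) {x : ℝ}
    (hx : 0 < x) :
    gammaPDF a r x * ∫⁻ y, gammaPDF a r y * ENNReal.ofReal (x - y)
      = ∫⁻ t in Ioi 0, ENNReal.ofReal ((r ^ a / Gamma a) ^ 2 * t ^ (a - 1) * (1 - t)
          * (x ^ (2 * a) * exp (-(r * (1 + t) * x)))) := by
  rw [lintegral_eq_ofReal_mul_lintegral_comp_mul_left _ hx,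
    lintegral_eq_setLIntegral_Ioi_of_eq_zero fun t ht => by
      rw [gammaPDF_of_neg (mul_neg_of_pos_of_neg hx ht), zero_mul],
    ← mul_assoc, ← lintegral_const_mul' (gammaPDF a r x * ENNReal.ofReal x) _
      (ENNReal.mul_ne_top ENNReal.ofReal_ne_top ENNReal.ofReal_ne_top)]
  refine setLIntegral_congr_fun measurableSet_Ioi fun t (ht : 0 < t) => ?_
  rw [gammaPDF_of_nonneg hx.le, gammaPDF_of_nonneg (by positivity),
    ← ENNReal.ofReal_mul (by positivity), ← ENNReal.ofReal_mul (by positivity),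
    ← ENNReal.ofReal_mul (by positivity)]
  congr 1
  have hx2a : x ^ (2 * a) = x ^ (a - 1) * x ^ (a - 1) * x * x := by
    rw [← rpow_add hx, ← rpow_add_one hx.ne', ← rpow_add_one hx.ne']
    ring_nf
  have hexp : exp (-(r * (1 + t) * x)) = exp (-(r * x)) * exp (-(r * (x * t))) := by
    rw [← exp_add]
    ring_nf
  rw [mul_rpow hx.le ht.le, hx2a, hexp]
  ring

lemma lintegral_ofReal_sub_gammaMeasure_prod (ha : 0 < a) (hr : 0 < r) :
    ∫⁻ p, ENNReal.ofReal (p.1 - p.2) ∂(gammaMeasure a r).prod (gammaMeasure a r)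
      = ENNReal.ofReal (Gamma (a + 1 / 2) / (√π * r * Gamma a)) := by
  set c := r ^ a / Gamma a with hc
  set D := c ^ 2 * ((1 / r) ^ (2 * a + 1) * Gamma (2 * a + 1)) with hD
  calc _ = ∫⁻ x, gammaPDF a r x * ∫⁻ y, gammaPDF a r y * ENNReal.ofReal (x - y) := by
        have hinner (x : ℝ) : ∫⁻ y, ENNReal.ofReal (x - y) ∂gammaMeasure a r
            = ∫⁻ y, gammaPDF a r y * ENNReal.ofReal (x - y) :=
          lintegral_withDensity_eq_lintegral_mul _ (measurable_gammaPDF a r) (by fun_prop)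
        simp only [gammaMeasure] at hinner ⊢
        rw [lintegral_prod _ (by fun_prop)]
        simp_rw [hinner]
        exact lintegral_withDensity_eq_lintegral_mul _ (measurable_gammaPDF a r)
          (Measurable.lintegral_prod_right (by fun_prop))
    _ = ∫⁻ x in Ioi 0, ∫⁻ t in Ioi 0, ENNReal.ofReal
          (c ^ 2 * t ^ (a - 1) * (1 - t) * (x ^ (2 * a) * exp (-(r * (1 + t) * x)))) := by
        rw [lintegral_eq_setLIntegral_Ioi_of_eq_zero fun x hx => by
          rw [gammaPDF_of_neg hx, zero_mul]]
        exact setLIntegral_congr_fun measurableSet_Ioi fun x hx =>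
          gammaPDF_mul_lintegral_gammaPDF_mul_ofReal_sub ha hr hx
    _ = ∫⁻ t in Ioi 0, ∫⁻ x in Ioi 0, ENNReal.ofReal
          (c ^ 2 * t ^ (a - 1) * (1 - t) * (x ^ (2 * a) * exp (-(r * (1 + t) * x)))) :=
        lintegral_lintegral_swap (by fun_prop)
    _ = ∫⁻ t in Ioi 0,
          ENNReal.ofReal (D * (t ^ (a - 1) * (1 - t) * (1 + t) ^ (-(2 * a + 1)))) := by
        refine setLIntegral_congr_fun measurableSet_Ioi fun t (ht : 0 < t) => ?_
        have hx := lintegral_ofReal_mul_rpow_mul_exp_neg_mul_Ioi (c ^ 2 * t ^ (a - 1) * (1 - t))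
          (s := 2 * a + 1) (by positivity) (by positivity : 0 < r * (1 + t))
        rw [add_sub_cancel_right] at hx
        rw [hx, ← one_div_mul_one_div, mul_rpow (by positivity) (by positivity), one_div (1 + t),
          inv_rpow (by positivity), ← rpow_neg (by positivity), hD]
        congr 1
        ring
    _ = ENNReal.ofReal (D * (2 ^ (-(2 * a)) / a)) :=
        lintegral_Ioi_ofReal_mul_rpow_mul_one_sub_mul_one_add_rpow ha (by positivity)
    _ = _ := by
        have hr2a : (1 / r) ^ (2 * a + 1) = 1 / ((r ^ a) ^ 2 * r) := by
          rw [one_div, inv_rpow hr.le, rpow_add_one hr.ne', ← rpow_natCast, ← rpow_mul hr.le,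
            one_div, mul_comm a]
          norm_num
        have hΓ : Gamma a ≠ 0 := (Gamma_pos_of_pos ha).ne'
        congr 1
        rw [show D * (2 ^ (-(2 * a)) / a)
            = c ^ 2 * (1 / r) ^ (2 * a + 1) * (Gamma (2 * a + 1) * 2 ^ (-(2 * a))) / a by ring,
          Gamma_two_mul_add_one_mul_two_rpow_neg ha, hr2a, hc]
        field_simp

lemma integral_abs_sub_gammaMeasure_prod (ha : 0 < a) (hr : 0 < r) :
    ∫ p, |p.1 - p.2| ∂(gammaMeasure a r).prod (gammaMeasure a r)
      = 2 * (Gamma (a + 1 / 2) / (√π * r * Gamma a)) := by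
  have := isProbabilityMeasure_gammaMeasure ha hr
  rw [integral_eq_lintegral_of_nonneg_ae (ae_of_all _ fun _ => abs_nonneg _) (by fun_prop),
    lintegral_prod_ofReal_abs_sub, lintegral_ofReal_sub_gammaMeasure_prod ha hr,
    ENNReal.toReal_mul, ENNReal.toReal_ofReal (by positivity)]
  norm_num

end Gamma

/-- For i.i.d. `X₁, X₂` with the `Gamma(α, λ)` distribution, the classical
Gini index `G = E[|X₁ − X₂|]/(2 E[X₁])` equals `Γ(α + 1/2)/(√π α Γ(α))`. -/
theorem Gini_index_gamma
    {Ω : Type*} [MeasureSpace Ω] [IsProbabilityMeasure (ℙ : Measure Ω)]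
    (α l : ℝ) (hα : 0 < α) (hl : 0 < l) (X₁ X₂ : Ω → ℝ)
    (hmeas₁ : Measurable X₁) (hmeas₂ : Measurable X₂)
    (hindep : IndepFun X₁ X₂ ℙ)
    (hident₁ : Measure.map X₁ ℙ = gammaMeasure α l)
    (hident₂ : Measure.map X₂ ℙ = gammaMeasure α l) :
    (∫ ω, |X₁ ω - X₂ ω| ∂ℙ) / (2 * ∫ ω, X₁ ω ∂ℙ) =
      Real.Gamma (α + 1 / 2) / (Real.sqrt Real.pi * α * Real.Gamma α) := by
  have hnum : ∫ ω, |X₁ ω - X₂ ω| ∂ℙ = 2 * (Gamma (α + 1 / 2) / (√π * l * Gamma α)) := by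
    rw [IndepFun.integral_comp_eq_integral_prod hmeas₁ hmeas₂ hindep
      (g := fun p => |p.1 - p.2|) (by fun_prop), hident₁, hident₂,
      integral_abs_sub_gammaMeasure_prod hα hl]
  have hden : ∫ ω, X₁ ω ∂ℙ = α / l := by
    rw [← integral_map (f := fun x => x) hmeas₁.aemeasurable aestronglyMeasurable_id, hident₁,
      integral_id_gammaMeasure hα hl]
  have hΓ : Gamma α ≠ 0 := (Gamma_pos_of_pos hα).ne'
  rw [hnum, hden]
  field_simp
end

section
/- Let 2 ≤ m ≤ n and let X₁, …, Xₙ be i.i.d. copies of a nonnegative random variable X whose law is absolutely continuous with cumulative distribution function F and finite positive mean, and assume all the expectations and improper integrals below exist (are finite). Then the sample m-th Gini index ÎG_m = [(m−1)!/((n−1)(n−2)⋯(n−m+1))] · ( Σ_{1 ≤ i₁ < ⋯ < i_m ≤ n} ( max{X_{i₁},…,X_{i_m}} − min{X_{i₁},…,X_{i_m}} ) ) / ( Σ_{i=1}^{n} X_i ) satisfies E[ÎG_m] = (n/m) ∫₀^∞ ∫₀^∞ ( L(z)^m − E[1_{{X ≤ t}} e^{−Xz}]^m ) dt · L(z)^{n−m}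 dz − (n/m) ∫₀^∞ ∫₀^∞ E[1_{{X ≥ t}} e^{−Xz}]^m dt · L(z)^{n−m} dz, where L(z) = E[e^{−zX}] = ∫₀^∞ e^{−zx} dF(x) is the Laplace transform of the law of X. -/
/-!
For an `m`-subset `s` of the sample with sum `S` (positive a.s., the law having no atoms),
`(max_s − min_s) / S = ∫₀^∞ ∫₀^∞ 1{min_s < t ≤ max_s} e^{-zS} dt dz`, so by Tonelli (hence the
computation in `ℝ≥0∞`) its expectation is `∫∫ E[1{min_s < t ≤ max_s} e^{-zS}] dt dz`. The event
`min_s < t ≤ max_s` is the complement of the disjoint events "all `X_i < t`" and "all `X_i ≥ t`"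
(`i ∈ s`), and `e^{-zS}` factors over the independent `X_i`; hence the inner expectation is
`(L^m − A(t)^m − B(t)^m) L^{n−m}` with `A(t) = E[1{X < t} e^{-zX}]`, `B(t) = E[1{X ≥ t} e^{-zX}]`,
and without atoms `A(t)` may be taken over `X ≤ t`. All `C(n, m)` subsets contribute the same, and
`(m−1)!/((n−1)⋯(n−m+1)) · C(n, m) = n/m`.
-/

open MeasureTheory ProbabilityTheory Set
open scoped ENNReal

lemma factorial_div_descFactorial_mul_choose {n m : ℕ} (hm : 0 < m) (hmn : m ≤ n) :
    ((m - 1).factorial : ℝ) / (n - 1).descFactorial (m - 1) * n.choose m = n / m := by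
  obtain ⟨k, rfl⟩ := Nat.exists_eq_add_of_lt hm
  obtain ⟨l, rfl⟩ := Nat.exists_eq_add_of_lt (hm.trans_le hmn)
  simp only [zero_add, Nat.add_sub_cancel] at *
  have hnat : (k + 1) * (k.factorial * (l + 1).choose (k + 1)) = (l + 1) * l.descFactorial k := by
    rw [← mul_assoc, ← Nat.factorial_succ, ← Nat.descFactorial_eq_factorial_mul_choose,
      Nat.succ_descFactorial_succ]
  have hD : (l.descFactorial k : ℝ) ≠ 0 := by
    exact_mod_cast (Nat.descFactorial_pos.2 (by omega)).ne'
  field_simp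
  exact_mod_cast (mul_comm _ _).trans (hnat.trans (mul_comm _ _))

lemma lintegral_exp_neg_mul_Ioi {b : ℝ} (hb : 0 < b) :
    ∫⁻ z in Ioi (0 : ℝ), ENNReal.ofReal (Real.exp (-(z * b))) = ENNReal.ofReal b⁻¹ := by
  have h : ∀ z, -(z * b) = -b * z := fun z => by ring
  simp_rw [h]
  rw [← ofReal_integral_eq_lintegral_ofReal (integrableOn_exp_mul_Ioi (by linarith) 0)
    (ae_of_all _ fun z => (Real.exp_pos _).le), integral_exp_mul_Ioi (by linarith)]
  simp [neg_div, div_neg]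

lemma ofReal_div_eq_lintegral_mul_exp {r S : ℝ} (hr : 0 ≤ r) (hS : 0 < S) :
    ENNReal.ofReal (r / S) = ∫⁻ z in Ioi 0, ENNReal.ofReal (r * Real.exp (-(z * S))) := by
  simp_rw [ENNReal.ofReal_mul hr]
  rw [lintegral_const_mul' _ _ ENNReal.ofReal_ne_top, lintegral_exp_neg_mul_Ioi hS,
    ← ENNReal.ofReal_mul hr, div_eq_mul_inv]

lemma ofReal_sub_mul_eq_lintegral_indicator_Ioc {a b : ℝ} (ha : 0 ≤ a) (c : ℝ≥0∞) :
    ENNReal.ofReal (b - a) * c = ∫⁻ t in Ioi 0, (Ioc a b).indicator (fun _ => c) t := by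
  rw [lintegral_indicator measurableSet_Ioc, Measure.restrict_restrict measurableSet_Ioc,
    inter_eq_left.2 (show Ioc a b ⊆ Ioi 0 from fun t ht => ha.trans_lt ht.1), setLIntegral_const,
    Real.volume_Ioc, mul_comm]

lemma indicator_Ioc_inf'_sup'_add_indicator {Ω ι M : Type*} [AddMonoid M] {s : Finset ι}
    (hs : s.Nonempty) (X : ι → Ω → ℝ) (F : Ω → M) (t : ℝ) (ω : Ω) :
    (Ioc (s.inf' hs (X · ω)) (s.sup' hs (X · ω))).indicator (fun _ => F ω) t +
      ({ω | ∀ i ∈ s, X i ω ∈ Iio t}.indicator F ω + {ω | ∀ i ∈ s, X i ω ∈ Ici t}.indicator F ω) =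
      F ω := by
  have hle : s.inf' hs (X · ω) ≤ s.sup' hs (X · ω) :=
    (Finset.inf'_le _ hs.choose_spec).trans (Finset.le_sup' (X · ω) hs.choose_spec)
  have hlo : ω ∈ {ω | ∀ i ∈ s, X i ω ∈ Iio t} ↔ s.sup' hs (X · ω) < t :=
    by rw [mem_ofPred_eq, Finset.sup'_lt_iff]; rfl
  have hhi : ω ∈ {ω | ∀ i ∈ s, X i ω ∈ Ici t} ↔ t ≤ s.inf' hs (X · ω) :=
    by rw [mem_ofPred_eq, Finset.le_inf'_iff]; rfl
  simp only [indicator_apply, hlo, hhi, mem_Ioc]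
  by_cases hlt : s.sup' hs (X · ω) < t
  · rw [if_neg fun h => not_le.2 hlt h.2, if_pos hlt, if_neg (not_le.2 (hle.trans_lt hlt))]
    simp
  · by_cases hge : t ≤ s.inf' hs (X · ω)
    · rw [if_neg fun h => not_lt.2 hge h.1, if_neg hlt, if_pos hge]
      simp
    · rw [if_pos ⟨not_le.1 hge, not_lt.1 hlt⟩, if_neg hlt, if_neg hge]
      simp

lemma Finset.measurable_sup'_apply {Ω ι : Type*} [MeasurableSpace Ω] {s : Finset ι}
    (hs : s.Nonempty) {f : ι → Ω → ℝ} (hf : ∀ i, Measurable (f i)) :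
    Measurable fun ω => s.sup' hs (f · ω) := by
  convert Finset.measurable_sup' hs fun i _ => hf i using 1
  ext ω; rw [Finset.sup'_apply]

lemma Finset.measurable_inf'_apply {Ω ι : Type*} [MeasurableSpace Ω] {s : Finset ι}
    (hs : s.Nonempty) {f : ι → Ω → ℝ} (hf : ∀ i, Measurable (f i)) :
    Measurable fun ω => s.inf' hs (f · ω) := by
  convert (Finset.inf'_induction hs f (fun _ ha _ hb => ha.inf hb) fun i _ => hf i :
    Measurable (s.inf' hs f)) using 1
  ext ω; rw [Finset.inf'_apply]

lemma ae_pos_of_map_eq {Ω : Type*} [MeasurableSpace Ω] {P : Measure Ω} {Y : Ω → ℝ}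
    (hY : Measurable Y) (h0 : ∀ ω, 0 ≤ Y ω) {μ : Measure ℝ} [NullSingletonClass μ]
    (hmap : P.map Y = μ) : ∀ᵐ ω ∂P, 0 < Y ω := by
  rw [ae_iff]
  refine measure_mono_null (t := Y ⁻¹' {0})
    (fun ω hω => (le_antisymm (not_lt.1 hω) (h0 ω) : Y ω = 0)) ?_
  rw [← Measure.map_apply hY (measurableSet_singleton 0), hmap, measure_singleton]

/-- `E[1_C(X) e^{-zX}]` for `X ∼ μ`; `laplaceOn μ univ` is the Laplace transform `L`. -/
noncomputable def laplaceOn (μ : Measure ℝ) (C : Set ℝ) (z : ℝ) : ℝ≥0∞ :=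
  ∫⁻ x in C, ENNReal.ofReal (Real.exp (-(z * x))) ∂μ

lemma laplaceOn_Iio {μ : Measure ℝ} [NullSingletonClass μ] (t z : ℝ) :
    laplaceOn μ (Iio t) z = laplaceOn μ (Iic t) z :=
  setLIntegral_congr Iio_ae_eq_Iic

lemma laplaceOn_le_laplaceOn_univ (μ : Measure ℝ) (C : Set ℝ) (z : ℝ) :
    laplaceOn μ C z ≤ laplaceOn μ univ z := by
  simpa only [laplaceOn, Measure.restrict_univ] using setLIntegral_le_lintegral C _

lemma laplaceOn_ne_top {μ : Measure ℝ} [IsFiniteMeasure μ] (hμ : ∀ᵐ x ∂μ, 0 ≤ x) {z : ℝ}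
    (hz : 0 ≤ z) (C : Set ℝ) : laplaceOn μ C z ≠ ∞ := by
  refine ne_top_of_le_ne_top (measure_ne_top μ C) ?_
  calc laplaceOn μ C z ≤ ∫⁻ _ in C, 1 ∂μ :=
        lintegral_mono_ae ((ae_restrict_of_ae hμ).mono fun x hx =>
          ENNReal.ofReal_le_one.2 (Real.exp_le_one_iff.2 (by nlinarith)))
    _ = μ C := setLIntegral_one C

noncomputable def laplaceRangeIntegral (μ : Measure ℝ) (m k : ℕ) : ℝ≥0∞ :=
  ∫⁻ z in Ioi 0, (∫⁻ t in Ioi 0,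
    laplaceOn μ univ z ^ m - laplaceOn μ (Iio t) z ^ m - laplaceOn μ (Ici t) z ^ m) *
      laplaceOn μ univ z ^ k

section IID

variable {Ω ι : Type*} [MeasurableSpace Ω] {P : Measure Ω} [Fintype ι] {X : ι → Ω → ℝ}
  {μ : Measure ℝ}

lemma lintegral_prod_ite_mem_of_iIndepFun [DecidableEq ι] (hX : ∀ i, Measurable (X i))
    (hindep : iIndepFun X P) (hident : ∀ i, P.map (X i) = μ) {g h : ℝ → ℝ≥0∞}
    (hg : Measurable g) (hh : Measurable h) (s : Finset ι) :
    ∫⁻ ω, ∏ i, (if i ∈ s then g (X i ω) else h (X i ω)) ∂P =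
      (∫⁻ x, g x ∂μ) ^ s.card * (∫⁻ x, h x ∂μ) ^ (Fintype.card ι - s.card) := by
  have hgh : ∀ i, Measurable fun x => if i ∈ s then g x else h x := fun i => by
    split_ifs <;> assumption
  have hfactor : ∀ i, ∫⁻ ω, (if i ∈ s then g (X i ω) else h (X i ω)) ∂P =
      if i ∈ s then ∫⁻ x, g x ∂μ else ∫⁻ x, h x ∂μ := fun i => by
    split_ifs <;> rw [← hident i, lintegral_map (by assumption) (hX i)]
  rw [lintegral_prod_eq_prod_lintegral_of_indepFun Finset.univ
    (fun i ω => if i ∈ s then g (X i ω) else h (X i ω)) (hindep.comp _ hgh)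
    fun i => (hgh i).comp (hX i)]
  simp only [hfactor, Finset.prod_ite, Finset.prod_const, Finset.filter_mem_eq_inter,
    Finset.univ_inter]
  rw [Finset.filter_not, Finset.filter_mem_eq_inter, Finset.univ_inter,
    Finset.card_sdiff_of_subset (Finset.subset_univ s), Finset.card_univ]

lemma lintegral_indicator_forall_mem_exp_neg_mul_sum (hX : ∀ i, Measurable (X i))
    (hindep : iIndepFun X P) (hident : ∀ i, P.map (X i) = μ) (z : ℝ) (s : Finset ι)
    {C : Set ℝ} (hC : MeasurableSet C) :
    ∫⁻ ω, {ω | ∀ i ∈ s, X i ω ∈ C}.indicator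
        (fun ω => ENNReal.ofReal (Real.exp (-(z * ∑ i, X i ω)))) ω ∂P =
      laplaceOn μ C z ^ s.card * laplaceOn μ univ z ^ (Fintype.card ι - s.card) := by
  classical
  set f : ℝ → ℝ≥0∞ := fun x => ENNReal.ofReal (Real.exp (-(z * x))) with hf_def
  have hf : Measurable f := by fun_prop
  have hprod : ∀ ω, {ω | ∀ i ∈ s, X i ω ∈ C}.indicator (fun ω => f (∑ i, X i ω)) ω =
      ∏ i, if i ∈ s then C.indicator f (X i ω) else f (X i ω) := by
    intro ω
    have hexp : f (∑ i, X i ω) = ∏ i, f (X i ω) := by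
      simp only [hf_def, Finset.mul_sum, ← Finset.sum_neg_distrib, Real.exp_sum]
      exact ENNReal.ofReal_prod_of_nonneg fun i _ => (Real.exp_pos _).le
    by_cases hω : ∀ i ∈ s, X i ω ∈ C
    · rw [indicator_of_mem (show ω ∈ {ω | ∀ i ∈ s, X i ω ∈ C} from hω), hexp]
      refine Finset.prod_congr rfl fun i _ => ?_
      split_ifs with hi
      exacts [(indicator_of_mem (hω i hi) f).symm, rfl]
    · obtain ⟨i, hi, hiC⟩ := not_forall₂.1 hω
      rw [indicator_of_notMem (show ω ∉ {ω | ∀ i ∈ s, X i ω ∈ C} from hω),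
        Finset.prod_eq_zero (Finset.mem_univ i) (by rw [if_pos hi, indicator_of_notMem hiC])]
  refine (lintegral_congr hprod).trans ?_
  rw [lintegral_prod_ite_mem_of_iIndepFun hX hindep hident (hf.indicator hC) hf,
    lintegral_indicator hC]
  simp only [laplaceOn, hf_def, Measure.restrict_univ]

lemma lintegral_indicator_Ioc_inf'_sup' (hX : ∀ i, Measurable (X i)) (hindep : iIndepFun X P)
    (hident : ∀ i, P.map (X i) = μ) {z : ℝ} (hfin : laplaceOn μ univ z ≠ ∞) (t : ℝ)
    {s : Finset ι} (hs : s.Nonempty) :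
    ∫⁻ ω, (Ioc (s.inf' hs (X · ω)) (s.sup' hs (X · ω))).indicator
        (fun _ => ENNReal.ofReal (Real.exp (-(z * ∑ i, X i ω)))) t ∂P =
      (laplaceOn μ univ z ^ s.card - laplaceOn μ (Iio t) z ^ s.card -
        laplaceOn μ (Ici t) z ^ s.card) * laplaceOn μ univ z ^ (Fintype.card ι - s.card) := by
  classical
  have hset : ∀ C, MeasurableSet C → MeasurableSet {ω | ∀ i ∈ s, X i ω ∈ C} := fun C hC => by
    have : {ω | ∀ i ∈ s, X i ω ∈ C} = ⋂ i ∈ s, X i ⁻¹' C := by ext; simp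
    exact this ▸ MeasurableSet.biInter s.countable_toSet fun i _ => hX i hC
  have htotal := lintegral_indicator_forall_mem_exp_neg_mul_sum hX hindep hident z s
    MeasurableSet.univ
  have hlow := lintegral_indicator_forall_mem_exp_neg_mul_sum hX hindep hident z s
    (measurableSet_Iio (a := t))
  have hhigh := lintegral_indicator_forall_mem_exp_neg_mul_sum hX hindep hident z s
    (measurableSet_Ici (a := t))
  simp only [mem_univ, implies_true, ofPred_true, indicator_univ] at htotal
  set F : Ω → ℝ≥0∞ := fun ω => ENNReal.ofReal (Real.exp (-(z * ∑ i, X i ω)))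
  have hF : Measurable F := by fun_prop
  have hsum := (lintegral_congr fun ω => indicator_Ioc_inf'_sup'_add_indicator hs X F t ω).trans
    htotal
  have hFlow := hF.indicator (hset _ (measurableSet_Iio (a := t)))
  have hFhigh := hF.indicator (hset _ (measurableSet_Ici (a := t)))
  rw [lintegral_add_right _ (hFlow.fun_add hFhigh), lintegral_add_right _ hFhigh, hlow, hhigh]
    at hsum
  have hfin' : ∀ C,
      laplaceOn μ C z ^ s.card * laplaceOn μ univ z ^ (Fintype.card ι - s.card) ≠ ∞ := fun C =>
    ENNReal.mul_ne_top (ENNReal.pow_ne_top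
      ((laplaceOn_le_laplaceOn_univ μ C z).trans_lt hfin.lt_top).ne) (ENNReal.pow_ne_top hfin)
  refine (ENNReal.eq_sub_of_add_eq (ENNReal.add_ne_top.2 ⟨hfin' _, hfin' _⟩) hsum).trans ?_
  rw [← tsub_tsub, ENNReal.sub_mul fun _ _ => ENNReal.pow_ne_top hfin,
    ENNReal.sub_mul fun _ _ => ENNReal.pow_ne_top hfin]

lemma lintegral_ofReal_sup'_sub_inf'_div_sum [SFinite P] [IsFiniteMeasure μ]
    (hX : ∀ i, Measurable (X i)) (hindep : iIndepFun X P) (hident : ∀ i, P.map (X i) = μ)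
    (hμ : ∀ᵐ x ∂μ, 0 ≤ x) (hpos : ∀ᵐ ω ∂P, ∀ i, 0 < X i ω) {s : Finset ι} (hs : s.Nonempty) :
    ∫⁻ ω, ENNReal.ofReal ((s.sup' hs (X · ω) - s.inf' hs (X · ω)) / ∑ i, X i ω) ∂P =
      laplaceRangeIntegral μ s.card (Fintype.card ι - s.card) := by
  have hsup := Finset.measurable_sup'_apply hs hX
  have hinf := Finset.measurable_inf'_apply hs hX
  have hle : ∀ ω, s.inf' hs (X · ω) ≤ s.sup' hs (X · ω) := fun ω =>
    (Finset.inf'_le _ hs.choose_spec).trans (Finset.le_sup' (X · ω) hs.choose_spec)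
  have hdiv : ∀ᵐ ω ∂P, ENNReal.ofReal ((s.sup' hs (X · ω) - s.inf' hs (X · ω)) / ∑ i, X i ω) =
      ∫⁻ z in Ioi 0, ENNReal.ofReal
        ((s.sup' hs (X · ω) - s.inf' hs (X · ω)) * Real.exp (-(z * ∑ i, X i ω))) :=
    hpos.mono fun ω hω => ofReal_div_eq_lintegral_mul_exp (sub_nonneg.2 (hle ω))
      (Finset.sum_pos (fun i _ => hω i) ⟨_, Finset.mem_univ hs.choose⟩)
  rw [lintegral_congr_ae hdiv, lintegral_lintegral_swap (by fun_prop)]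
  refine setLIntegral_congr_fun measurableSet_Ioi fun z hz => ?_
  have hfin := laplaceOn_ne_top hμ (le_of_lt hz) univ
  have ht : ∀ᵐ ω ∂P, ENNReal.ofReal
        ((s.sup' hs (X · ω) - s.inf' hs (X · ω)) * Real.exp (-(z * ∑ i, X i ω))) =
      ∫⁻ t in Ioi 0, (Ioc (s.inf' hs (X · ω)) (s.sup' hs (X · ω))).indicator
        (fun _ => ENNReal.ofReal (Real.exp (-(z * ∑ i, X i ω)))) t :=
    hpos.mono fun ω hω => by
      rw [ENNReal.ofReal_mul (sub_nonneg.2 (hle ω)), ofReal_sub_mul_eq_lintegral_indicator_Ioc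
        ((Finset.lt_inf'_iff hs).2 fun i _ => hω i).le]
  have hmeas : Measurable fun p : Ω × ℝ =>
      (Ioc (s.inf' hs (X · p.1)) (s.sup' hs (X · p.1))).indicator
        (fun _ => ENNReal.ofReal (Real.exp (-(z * ∑ i, X i p.1)))) p.2 :=
    Measurable.indicator (f := fun p : Ω × ℝ => ENNReal.ofReal (Real.exp (-(z * ∑ i, X i p.1))))
      (by fun_prop) ((measurableSet_lt (hinf.comp measurable_fst) measurable_snd).inter
        (measurableSet_le measurable_snd (hsup.comp measurable_fst)))
  rw [lintegral_congr_ae ht, lintegral_lintegral_swap hmeas.aemeasurable,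
    ← lintegral_mul_const' _ _ (ENNReal.pow_ne_top hfin)]
  exact setLIntegral_congr_fun measurableSet_Ioi fun t _ =>
    lintegral_indicator_Ioc_inf'_sup' hX hindep hident hfin t hs

lemma integral_sum_sup'_sub_inf'_div_sum [SFinite P] [IsFiniteMeasure μ]
    (hX : ∀ i, Measurable (X i)) (hindep : iIndepFun X P) (hident : ∀ i, P.map (X i) = μ)
    (hμ : ∀ᵐ x ∂μ, 0 ≤ x) (hpos : ∀ᵐ ω ∂P, ∀ i, 0 < X i ω) {m : ℕ} (hm : 0 < m) :
    ∫ ω, (∑ s ∈ Finset.powersetCard m Finset.univ,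
        if h : s.Nonempty then s.sup' h (X · ω) - s.inf' h (X · ω) else 0) / ∑ i, X i ω ∂P =
      (Fintype.card ι).choose m * (laplaceRangeIntegral μ m (Fintype.card ι - m)).toReal := by
  have hne : ∀ s ∈ Finset.powersetCard m (Finset.univ : Finset ι), s.Nonempty := fun s hs =>
    Finset.card_pos.1 ((Finset.mem_powersetCard.1 hs).2 ▸ hm)
  have hrange : ∀ (s : Finset ι) (hs : s.Nonempty) ω,
      0 ≤ s.sup' hs (X · ω) - s.inf' hs (X · ω) := fun s hs ω => sub_nonneg.2 <|
      (Finset.inf'_le _ hs.choose_spec).trans (Finset.le_sup' (X · ω) hs.choose_spec)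
  have hD : ∀ s : Finset ι, Measurable fun ω =>
      if h : s.Nonempty then s.sup' h (X · ω) - s.inf' h (X · ω) else 0 := fun s => by
    by_cases h : s.Nonempty
    · simp only [dif_pos h]
      exact (Finset.measurable_sup'_apply h hX).sub (Finset.measurable_inf'_apply h hX)
    · simp only [dif_neg h]
      exact measurable_const
  have hnonneg : ∀ᵐ ω ∂P, ∀ s ∈ Finset.powersetCard m Finset.univ,
      0 ≤ (if h : s.Nonempty then s.sup' h (X · ω) - s.inf' h (X · ω) else 0) / ∑ i, X i ω :=
    hpos.mono fun ω hω s hs => div_nonneg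
      (by simpa only [dif_pos (hne s hs)] using hrange s (hne s hs) ω)
      (Finset.sum_nonneg fun i _ => (hω i).le)
  have hterm : ∀ s ∈ Finset.powersetCard m Finset.univ, ∫⁻ ω, ENNReal.ofReal
      ((if h : s.Nonempty then s.sup' h (X · ω) - s.inf' h (X · ω) else 0) / ∑ i, X i ω) ∂P =
        laplaceRangeIntegral μ m (Fintype.card ι - m) := fun s hs => by
    simp only [dif_pos (hne s hs)]
    obtain ⟨-, rfl⟩ := Finset.mem_powersetCard.1 hs
    exact lintegral_ofReal_sup'_sub_inf'_div_sum hX hindep hident hμ hpos _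
  have hS : Measurable fun ω => ∑ i, X i ω := Finset.measurable_sum _ fun i _ => hX i
  simp_rw [Finset.sum_div]
  rw [integral_eq_lintegral_of_nonneg_ae (hnonneg.mono fun ω hω => Finset.sum_nonneg hω)
      (Finset.measurable_sum _ fun s _ => (hD s).div hS).aestronglyMeasurable,
    lintegral_congr_ae (hnonneg.mono fun ω hω => ENNReal.ofReal_sum_of_nonneg hω),
    lintegral_finsetSum _ fun s _ => ((hD s).fun_div hS).ennreal_ofReal,
    Finset.sum_congr rfl hterm, Finset.sum_const, Finset.card_powersetCard, Finset.card_univ,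
    nsmul_eq_mul, ENNReal.toReal_mul, ENNReal.toReal_natCast]

end IID

noncomputable def laplaceRangeKernel (μ : Measure ℝ) (m : ℕ) (z t : ℝ) : ℝ :=
  (∫ x, Real.exp (-(z * x)) ∂μ) ^ m - (∫ x in Iic t, Real.exp (-(x * z)) ∂μ) ^ m -
    (∫ x in Ici t, Real.exp (-(x * z)) ∂μ) ^ m

section LaplaceRangeKernel

variable {μ : Measure ℝ} [IsFiniteMeasure μ] {z : ℝ}

lemma integrable_exp_neg_mul (hμ : ∀ᵐ x ∂μ, 0 ≤ x) (hz : 0 ≤ z) :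
    Integrable (fun x => Real.exp (-(z * x))) μ :=
  (integrable_const 1).mono' (by fun_prop : Measurable _).aestronglyMeasurable <|
    hμ.mono fun x hx => by
      rw [Real.norm_of_nonneg (Real.exp_pos _).le]
      exact Real.exp_le_one_iff.2 (by nlinarith)

lemma ofReal_setIntegral_exp_neg_mul (hμ : ∀ᵐ x ∂μ, 0 ≤ x) (hz : 0 ≤ z) (C : Set ℝ) :
    ENNReal.ofReal (∫ x in C, Real.exp (-(z * x)) ∂μ) = laplaceOn μ C z :=
  ofReal_integral_eq_lintegral_ofReal (integrable_exp_neg_mul hμ hz).integrableOn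
    (ae_of_all _ fun _ => (Real.exp_pos _).le)

lemma ofReal_integral_exp_neg_mul (hμ : ∀ᵐ x ∂μ, 0 ≤ x) (hz : 0 ≤ z) :
    ENNReal.ofReal (∫ x, Real.exp (-(z * x)) ∂μ) = laplaceOn μ univ z := by
  simpa only [setIntegral_univ] using ofReal_setIntegral_exp_neg_mul hμ hz univ

variable [NullSingletonClass μ]

lemma laplaceRangeKernel_nonneg (hμ : ∀ᵐ x ∂μ, 0 ≤ x) (hz : 0 ≤ z) {m : ℕ} (hm : m ≠ 0)
    (t : ℝ) : 0 ≤ laplaceRangeKernel μ m z t := by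
  simp only [laplaceRangeKernel, mul_comm _ z]
  have hsplit : (∫ x in Iic t, Real.exp (-(z * x)) ∂μ) + ∫ x in Ici t, Real.exp (-(z * x)) ∂μ =
      ∫ x, Real.exp (-(z * x)) ∂μ := by
    rw [← setIntegral_congr_set Ioi_ae_eq_Ici, ← compl_Iic,
      integral_add_compl measurableSet_Iic (integrable_exp_neg_mul hμ hz)]
  have hexp : ∀ x, 0 ≤ Real.exp (-(z * x)) := fun x => (Real.exp_pos _).le
  have := pow_add_pow_le
    (setIntegral_nonneg (μ := μ) (measurableSet_Iic (a := t)) fun x _ => hexp x)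
    (setIntegral_nonneg (μ := μ) (measurableSet_Ici (a := t)) fun x _ => hexp x) hm
  rw [hsplit] at this
  linarith

lemma ofReal_laplaceRangeKernel (hμ : ∀ᵐ x ∂μ, 0 ≤ x) (hz : 0 ≤ z) (m : ℕ) (t : ℝ) :
    ENNReal.ofReal (laplaceRangeKernel μ m z t) =
      laplaceOn μ univ z ^ m - laplaceOn μ (Iio t) z ^ m - laplaceOn μ (Ici t) z ^ m := by
  simp only [laplaceRangeKernel, mul_comm _ z]
  rw [ENNReal.ofReal_sub _ (pow_nonneg (integral_nonneg fun _ => (Real.exp_pos _).le) m),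
    ENNReal.ofReal_sub _ (pow_nonneg (integral_nonneg fun _ => (Real.exp_pos _).le) m),
    ENNReal.ofReal_pow (integral_nonneg fun _ => (Real.exp_pos _).le),
    ENNReal.ofReal_pow (integral_nonneg fun _ => (Real.exp_pos _).le),
    ENNReal.ofReal_pow (integral_nonneg fun _ => (Real.exp_pos _).le),
    ofReal_integral_exp_neg_mul hμ hz, ofReal_setIntegral_exp_neg_mul hμ hz,
    ofReal_setIntegral_exp_neg_mul hμ hz, laplaceOn_Iio]

lemma integral_laplaceRangeKernel_mul_pow (hμ : ∀ᵐ x ∂μ, 0 ≤ x) {m : ℕ} (hm : m ≠ 0) (k : ℕ)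
    (hinner : ∀ z ∈ Ioi (0 : ℝ), IntegrableOn (laplaceRangeKernel μ m z) (Ioi 0))
    (houter : IntegrableOn (fun z => (∫ t in Ioi 0, laplaceRangeKernel μ m z t) *
      (∫ x, Real.exp (-(z * x)) ∂μ) ^ k) (Ioi 0)) :
    ∫ z in Ioi 0, (∫ t in Ioi 0, laplaceRangeKernel μ m z t) * (∫ x, Real.exp (-(z * x)) ∂μ) ^ k =
      (laplaceRangeIntegral μ m k).toReal := by
  have hinner_nonneg : ∀ z ∈ Ioi (0 : ℝ), 0 ≤ ∫ t in Ioi 0, laplaceRangeKernel μ m z t :=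
    fun z hz => setIntegral_nonneg measurableSet_Ioi fun t _ =>
      laplaceRangeKernel_nonneg hμ (le_of_lt hz) hm t
  have hL_nonneg : ∀ z, 0 ≤ ∫ x, Real.exp (-(z * x)) ∂μ :=
    fun z => integral_nonneg fun _ => (Real.exp_pos _).le
  rw [integral_eq_lintegral_of_nonneg_ae ((ae_restrict_iff' measurableSet_Ioi).2 <|
      ae_of_all _ fun z hz => mul_nonneg (hinner_nonneg z hz) (pow_nonneg (hL_nonneg z) k))
    houter.aestronglyMeasurable, laplaceRangeIntegral]
  congr 1
  refine setLIntegral_congr_fun measurableSet_Ioi fun z hz => ?_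
  rw [ENNReal.ofReal_mul (hinner_nonneg z hz), ENNReal.ofReal_pow (hL_nonneg z),
    ofReal_integral_exp_neg_mul hμ (le_of_lt hz),
    ofReal_integral_eq_lintegral_ofReal (hinner z hz) ((ae_restrict_iff' measurableSet_Ioi).2 <|
      ae_of_all _ fun t _ => laplaceRangeKernel_nonneg hμ (le_of_lt hz) hm t)]
  simp_rw [ofReal_laplaceRangeKernel hμ (le_of_lt hz) m]

lemma integral_sub_integral_eq_toReal_laplaceRangeIntegral (hμ : ∀ᵐ x ∂μ, 0 ≤ x) {m : ℕ}
    (hm : m ≠ 0) (k : ℕ)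
    (h1 : ∀ z ∈ Ioi (0 : ℝ), IntegrableOn (fun t => (∫ x, Real.exp (-(z * x)) ∂μ) ^ m -
      (∫ x in Iic t, Real.exp (-(x * z)) ∂μ) ^ m) (Ioi 0))
    (h2 : IntegrableOn (fun z => (∫ t in Ioi (0 : ℝ), ((∫ x, Real.exp (-(z * x)) ∂μ) ^ m -
      (∫ x in Iic t, Real.exp (-(x * z)) ∂μ) ^ m)) * (∫ x, Real.exp (-(z * x)) ∂μ) ^ k) (Ioi 0))
    (h3 : ∀ z ∈ Ioi (0 : ℝ), IntegrableOn (fun t => (∫ x in Ici t, Real.exp (-(x * z)) ∂μ) ^ m)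
      (Ioi 0))
    (h4 : IntegrableOn (fun z => (∫ t in Ioi (0 : ℝ), (∫ x in Ici t, Real.exp (-(x * z)) ∂μ) ^ m) *
      (∫ x, Real.exp (-(z * x)) ∂μ) ^ k) (Ioi 0)) :
    (∫ z in Ioi (0 : ℝ), (∫ t in Ioi (0 : ℝ), ((∫ x, Real.exp (-(z * x)) ∂μ) ^ m -
        (∫ x in Iic t, Real.exp (-(x * z)) ∂μ) ^ m)) * (∫ x, Real.exp (-(z * x)) ∂μ) ^ k) -
      ∫ z in Ioi (0 : ℝ), (∫ t in Ioi (0 : ℝ), (∫ x in Ici t, Real.exp (-(x * z)) ∂μ) ^ m) *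
        (∫ x, Real.exp (-(z * x)) ∂μ) ^ k =
      (laplaceRangeIntegral μ m k).toReal := by
  have hkernel : EqOn (fun z => (∫ t in Ioi (0 : ℝ), ((∫ x, Real.exp (-(z * x)) ∂μ) ^ m -
        (∫ x in Iic t, Real.exp (-(x * z)) ∂μ) ^ m)) * (∫ x, Real.exp (-(z * x)) ∂μ) ^ k -
      (∫ t in Ioi (0 : ℝ), (∫ x in Ici t, Real.exp (-(x * z)) ∂μ) ^ m) *
        (∫ x, Real.exp (-(z * x)) ∂μ) ^ k)
      (fun z => (∫ t in Ioi 0, laplaceRangeKernel μ m z t) * (∫ x, Real.exp (-(z * x)) ∂μ) ^ k)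
      (Ioi 0) := fun z hz => by
    dsimp only
    rw [← sub_mul, ← integral_sub (h1 z hz) (h3 z hz)]
    rfl
  rw [← integral_sub h2 h4, setIntegral_congr_fun measurableSet_Ioi hkernel]
  exact integral_laplaceRangeKernel_mul_pow hμ hm k (fun z hz => (h1 z hz).sub (h3 z hz))
    ((h2.sub h4).congr_fun hkernel measurableSet_Ioi)

end LaplaceRangeKernel

theorem expectation_sample_mth_Gini_index_general
    {Ω : Type*} [MeasureSpace Ω] [IsProbabilityMeasure (ℙ : Measure Ω)]
    (n m : ℕ) (hm : 2 ≤ m) (hmn : m ≤ n)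
    (X : Fin n → Ω → ℝ) (hmeas : ∀ i, Measurable (X i))
    (hnonneg : ∀ i, ∀ ω, 0 ≤ X i ω)
    (hindep : iIndepFun X ℙ)
    (μ₀ : Measure ℝ) [IsProbabilityMeasure μ₀]
    (hident : ∀ i, Measure.map (X i) ℙ = μ₀)
    (hac : μ₀ ≪ volume)
    (L : ℝ → ℝ) (hL : ∀ z, L z = ∫ x, Real.exp (-(z * x)) ∂μ₀)
    (G : Ω → ℝ)
    (hG : ∀ ω, G ω =
      (Nat.factorial (m - 1) : ℝ) / (Nat.descFactorial (n - 1) (m - 1)) *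
        ((∑ s ∈ Finset.powersetCard m (Finset.univ : Finset (Fin n)),
          if h : s.Nonempty then
            s.sup' h (fun i => X i ω) - s.inf' h (fun i => X i ω)
          else 0) /
        (∑ i, X i ω)))
    (h1 : ∀ z ∈ Ioi (0 : ℝ), IntegrableOn
      (fun t => L z ^ m - (∫ x in Iic t, Real.exp (-(x * z)) ∂μ₀) ^ m) (Ioi 0))
    (h2 : IntegrableOn (fun z =>
      (∫ t in Ioi (0 : ℝ), (L z ^ m - (∫ x in Iic t, Real.exp (-(x * z)) ∂μ₀) ^ m)) *
        L z ^ (n - m)) (Ioi 0))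
    (h3 : ∀ z ∈ Ioi (0 : ℝ), IntegrableOn
      (fun t => (∫ x in Ici t, Real.exp (-(x * z)) ∂μ₀) ^ m) (Ioi 0))
    (h4 : IntegrableOn (fun z =>
      (∫ t in Ioi (0 : ℝ), (∫ x in Ici t, Real.exp (-(x * z)) ∂μ₀) ^ m) *
        L z ^ (n - m)) (Ioi 0)) :
    ∫ ω, G ω ∂ℙ =
      (n / m : ℝ) *
          (∫ z in Ioi (0 : ℝ),
            (∫ t in Ioi (0 : ℝ),
              (L z ^ m - (∫ x in Iic t, Real.exp (-(x * z)) ∂μ₀) ^ m)) * L z ^ (n - m)) -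
        (n / m : ℝ) *
          (∫ z in Ioi (0 : ℝ),
            (∫ t in Ioi (0 : ℝ),
              (∫ x in Ici t, Real.exp (-(x * z)) ∂μ₀) ^ m) * L z ^ (n - m)) := by
  have hm0 : 0 < m := by omega
  have : NullSingletonClass μ₀ := ⟨fun x => hac (measure_singleton x)⟩
  have hpos : ∀ᵐ ω ∂ℙ, ∀ i, 0 < X i ω :=
    ae_all_iff.2 fun i => ae_pos_of_map_eq (hmeas i) (hnonneg i) (hident i)
  have hμ : ∀ᵐ x ∂μ₀, 0 ≤ x := by
    rw [← hident ⟨0, by omega⟩]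
    exact (ae_map_iff (hmeas _).aemeasurable measurableSet_Ici).2 (ae_of_all _ (hnonneg _))
  simp only [hL] at h1 h2 h3 h4 ⊢
  rw [funext hG, integral_const_mul,
    integral_sum_sup'_sub_inf'_div_sum hmeas hindep hident hμ hpos hm0, ← mul_sub,
    integral_sub_integral_eq_toReal_laplaceRangeIntegral hμ hm0.ne' (n - m) h1 h2 h3 h4,
    Fintype.card_fin, ← mul_assoc, factorial_div_descFactorial_mul_choose hm0 hmn]

/-- For `2 ≤ m ≤ n` and i.i.d. copies `X₁,…,Xₙ` of a nonnegative,
absolutely continuous random variable `X` with law `μ₀`, cdf `F` and finite positive mean,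
assuming all the expectations and improper integrals involved exist, the expectation of the
sample `m`-th Gini index
`ÎG_m = [(m−1)!/((n−1)⋯(n−m+1))] Σ_{i₁<⋯<i_m} (max − min) / Σᵢ Xᵢ`
equals
`(n/m) ∫₀^∞ ∫₀^∞ (L(z)^m − E[1_{X≤t} e^{−Xz}]^m) dt L(z)^{n−m} dz
  − (n/m) ∫₀^∞ ∫₀^∞ E[1_{X≥t} e^{−Xz}]^m dt L(z)^{n−m} dz`,
where `L` is the Laplace transform of the law of `X`. -/
theorem expectation_sample_mth_Gini_index
    {Ω : Type*} [MeasureSpace Ω] [IsProbabilityMeasure (ℙ : Measure Ω)]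
    (n m : ℕ) (hm : 2 ≤ m) (hmn : m ≤ n)
    (X : Fin n → Ω → ℝ) (hmeas : ∀ i, Measurable (X i))
    (hnonneg : ∀ i, ∀ ω, 0 ≤ X i ω)
    (hindep : iIndepFun X ℙ)
    (μ₀ : Measure ℝ) [IsProbabilityMeasure μ₀]
    (hident : ∀ i, Measure.map (X i) ℙ = μ₀)
    (hac : μ₀ ≪ volume)
    (hmeanInt : Integrable id μ₀) (hmean : 0 < ∫ x, x ∂μ₀)
    (L : ℝ → ℝ) (hL : ∀ z, L z = ∫ x, Real.exp (-(z * x)) ∂μ₀)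
    (G : Ω → ℝ)
    (hG : ∀ ω, G ω =
      (Nat.factorial (m - 1) : ℝ) / (Nat.descFactorial (n - 1) (m - 1)) *
        ((∑ s ∈ Finset.powersetCard m (Finset.univ : Finset (Fin n)),
          if h : s.Nonempty then
            s.sup' h (fun i => X i ω) - s.inf' h (fun i => X i ω)
          else 0) /
        (∑ i, X i ω)))
    (hGint : Integrable G ℙ)
    (h1 : ∀ z ∈ Ioi (0 : ℝ), IntegrableOn
      (fun t => L z ^ m - (∫ x in Iic t, Real.exp (-(x * z)) ∂μ₀) ^ m) (Ioi 0))
    (h2 : IntegrableOn (fun z =>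
      (∫ t in Ioi (0 : ℝ), (L z ^ m - (∫ x in Iic t, Real.exp (-(x * z)) ∂μ₀) ^ m)) *
        L z ^ (n - m)) (Ioi 0))
    (h3 : ∀ z ∈ Ioi (0 : ℝ), IntegrableOn
      (fun t => (∫ x in Ici t, Real.exp (-(x * z)) ∂μ₀) ^ m) (Ioi 0))
    (h4 : IntegrableOn (fun z =>
      (∫ t in Ioi (0 : ℝ), (∫ x in Ici t, Real.exp (-(x * z)) ∂μ₀) ^ m) *
        L z ^ (n - m)) (Ioi 0)) :
    ∫ ω, G ω ∂ℙ =
      (n / m : ℝ) *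
          (∫ z in Ioi (0 : ℝ),
            (∫ t in Ioi (0 : ℝ),
              (L z ^ m - (∫ x in Iic t, Real.exp (-(x * z)) ∂μ₀) ^ m)) * L z ^ (n - m)) -
        (n / m : ℝ) *
          (∫ z in Ioi (0 : ℝ),
            (∫ t in Ioi (0 : ℝ),
              (∫ x in Ici t, Real.exp (-(x * z)) ∂μ₀) ^ m) * L z ^ (n - m)) :=
  expectation_sample_mth_Gini_index_general n m hm hmn X hmeas hnonneg hindep μ₀ hident hac L hL G
    hG h1 h2 h3 h4
end
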